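/- arXiv:2103.08928 — 5 statements merged into one kernel-verified Lean document; each statement's English description precedes it below -/
import Mathlib

section
/- Let p ≥ 2 be a real number. Then for all vectors ξ, η ∈ ℝ^N one has 5^{(2−p)/2} |ξ − η|^p ≤ (|ξ|^{p−2} ξ − |η|^{p−2} η) · (ξ − η). -/
open scoped RealInnerProductSpace

private lemma aux_rpow1 {x : ℝ} (hx : 0 ≤ x) {r s : ℝ} (hr : r + 1 = s) (hs : s ≠ 0) :
    x ^ r * x = x ^ s := by
  rcases hx.eq_or_lt with h | h
  · rw [← h, Real.zero_rpow hs, mul_zero]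
  · calc x ^ r * x = x ^ r * x ^ (1:ℝ) := by rw [Real.rpow_one]
      _ = x ^ (r + 1) := (Real.rpow_add h r 1).symm
      _ = x ^ s := by rw [hr]

private lemma aux_sq_rpow {x : ℝ} (hx : 0 ≤ x) (q : ℝ) :
    (x ^ 2) ^ q = x ^ (2 * q) := by
  rw [show x ^ (2:ℕ) = x ^ ((2:ℕ):ℝ) from (Real.rpow_natCast x 2).symm,
    ← Real.rpow_mul hx]
  norm_num

/-- endpoint inequality at `I = ab` (case `b ≤ a`). -/
private lemma endA {p : ℝ} (hp : 2 ≤ p) {a b : ℝ} (hb : 0 ≤ b) (hab : b ≤ a) :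
    ((a+b)^2/5) ^ ((p-2)/2) * (a-b)^2 ≤ (a ^ (p-1) - b ^ (p-1)) * (a-b) := by
  have ha : 0 ≤ a := hb.trans hab
  have hq : 0 ≤ (p-2)/2 := by linarith
  have hK : ((a+b)^2/5) ^ ((p-2)/2) ≤ a ^ (p-2) := by
    have h1 : (a+b)^2/5 ≤ a^2 := by nlinarith
    have h2 : ((a+b)^2/5) ^ ((p-2)/2) ≤ (a^2) ^ ((p-2)/2) :=
      Real.rpow_le_rpow (by positivity) h1 hq
    rwa [aux_sq_rpow ha, show 2*((p-2)/2) = p-2 by ring] at h2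
  have e1a : a ^ (p-2) * a = a ^ (p-1) := aux_rpow1 ha (by ring) (by intro hcon; nlinarith [hcon])
  have e1b : b ^ (p-2) * b = b ^ (p-1) := aux_rpow1 hb (by ring) (by intro hcon; nlinarith [hcon])
  have hmono : b ^ (p-2) ≤ a ^ (p-2) := Real.rpow_le_rpow hb hab (by linarith : (0:ℝ) ≤ p - 2)
  have hA1 : a ^ (p-2) * (a-b) ≤ a ^ (p-1) - b ^ (p-1) := by
    have h3 : b ^ (p-2) * b ≤ a ^ (p-2) * b := mul_le_mul_of_nonneg_right hmono hb
    have h4 : a ^ (p-2) * (a-b) = a ^ (p-1) - a ^ (p-2) * b := by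
      rw [← e1a]; ring
    linarith
  have s1 : ((a+b)^2/5) ^ ((p-2)/2) * (a-b)^2 ≤ a ^ (p-2) * (a-b)^2 :=
    mul_le_mul_of_nonneg_right hK (sq_nonneg _)
  have s2 : a ^ (p-2) * (a-b)^2 ≤ (a ^ (p-1) - b ^ (p-1)) * (a-b) := by
    have h5 := mul_le_mul_of_nonneg_right hA1 (sub_nonneg.mpr hab)
    nlinarith [h5]
  linarith

/-- endpoint inequality at `I = -ab`. -/
private lemma endB {p : ℝ} (hp : 2 ≤ p) {a b : ℝ} (ha : 0 ≤ a) (hb : 0 ≤ b) :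
    ((a+b)^2/5) ^ ((p-2)/2) * (a+b)^2 ≤ (a ^ (p-1) + b ^ (p-1)) * (a+b) := by
  have hq : 0 ≤ (p-2)/2 := by linarith
  have hc : 0 ≤ a + b := by linarith
  have hs : (1:ℝ) ≤ p - 1 := by linarith
  -- convexity: (a+b)^(p-1) ≤ 2^(p-2) * (a^(p-1) + b^(p-1))
  have hmean : (a+b) ^ (p-1) ≤ (2:ℝ) ^ (p-2) * (a ^ (p-1) + b ^ (p-1)) := by
    have h := NNReal.rpow_add_le_mul_rpow_add_rpow (Real.toNNReal a) (Real.toNNReal b) hs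
    have h2 := NNReal.coe_le_coe.mpr h
    push_cast [NNReal.coe_rpow, Real.coe_toNNReal a ha, Real.coe_toNNReal b hb] at h2
    have hee : p - 1 - 1 = p - 2 := by ring
    rwa [hee] at h2
  have h45 : (2:ℝ) ^ (p-2) ≤ (5:ℝ) ^ ((p-2)/2) := by
    have h4 : (2:ℝ) ^ (p-2) = (4:ℝ) ^ ((p-2)/2) := by
      have h42 : (((2:ℝ)^2) : ℝ) ^ ((p-2)/2) = (2:ℝ) ^ (2*((p-2)/2)) := aux_sq_rpow (by norm_num) ((p-2)/2)
      rw [show (2:ℝ)*((p-2)/2) = p-2 by ring] at h42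
      rw [← h42]; norm_num
    rw [h4]
    exact Real.rpow_le_rpow (by norm_num) (by norm_num) hq
  have h5q : (0:ℝ) < (5:ℝ) ^ ((p-2)/2) := Real.rpow_pos_of_pos (by norm_num) _
  have hKval : ((a+b)^2/5) ^ ((p-2)/2) = (a+b) ^ (p-2) / (5:ℝ) ^ ((p-2)/2) := by
    rw [Real.div_rpow (sq_nonneg _) (by norm_num), aux_sq_rpow hc, show 2*((p-2)/2) = p-2 by ring]
  have e1c : (a+b) ^ (p-2) * (a+b) = (a+b) ^ (p-1) := aux_rpow1 hc (by ring) (by intro hcon; nlinarith [hcon])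
  have hcs : (a+b) ^ (p-1) ≤ (5:ℝ) ^ ((p-2)/2) * (a ^ (p-1) + b ^ (p-1)) := by
    have hsum : 0 ≤ a ^ (p-1) + b ^ (p-1) := by positivity
    calc (a+b) ^ (p-1) ≤ (2:ℝ) ^ (p-2) * (a ^ (p-1) + b ^ (p-1)) := hmean
      _ ≤ (5:ℝ) ^ ((p-2)/2) * (a ^ (p-1) + b ^ (p-1)) :=
        mul_le_mul_of_nonneg_right h45 hsum
  rw [hKval, div_mul_eq_mul_div, div_le_iff₀ h5q]
  have h6 : (a+b) ^ (p-2) * (a+b) ^ 2 = (a+b) ^ (p-1) * (a+b) := by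
    rw [← e1c]; ring
  rw [h6]
  have h7 := mul_le_mul_of_nonneg_right hcs hc
  nlinarith [h7]

/-- key scalar inequality. -/
private lemma keyIneq {p : ℝ} (hp : 2 ≤ p) {a b I : ℝ} (ha : 0 ≤ a) (hb : 0 ≤ b)
    (hI : |I| ≤ a * b) :
    ((a+b)^2/5) ^ ((p-2)/2) * (a^2 + b^2 - 2*I)
      ≤ a ^ p + b ^ p - (a ^ (p-2) + b ^ (p-2)) * I := by
  set K : ℝ := ((a+b)^2/5) ^ ((p-2)/2) with hKdef
  obtain ⟨hI1, hI2⟩ := abs_le.mp hI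
  have e1a : a ^ (p-2) * a = a ^ (p-1) := aux_rpow1 ha (by ring) (by intro hcon; nlinarith [hcon])
  have e1b : b ^ (p-2) * b = b ^ (p-1) := aux_rpow1 hb (by ring) (by intro hcon; nlinarith [hcon])
  have e2a : a ^ (p-1) * a = a ^ p := aux_rpow1 ha (by ring) (by intro hcon; nlinarith [hcon])
  have e2b : b ^ (p-1) * b = b ^ p := aux_rpow1 hb (by ring) (by intro hcon; nlinarith [hcon])
  have hA : K * (a-b)^2 ≤ (a ^ (p-1) - b ^ (p-1)) * (a-b) := by
    rcases le_total b a with h | h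
    · exact endA hp hb h
    · have h0 := endA hp ha h
      rw [add_comm b a] at h0
      have e : (b-a)^2 = (a-b)^2 := by ring
      have e2 : (b ^ (p-1) - a ^ (p-1)) * (b-a) = (a ^ (p-1) - b ^ (p-1)) * (a-b) := by ring
      rw [e, e2] at h0
      exact h0
  have hB : K * (a+b)^2 ≤ (a ^ (p-1) + b ^ (p-1)) * (a+b) := endB hp ha hb
  rcases le_total (2*K) (a ^ (p-2) + b ^ (p-2)) with h | h
  · have hprod : 0 ≤ (a ^ (p-2) + b ^ (p-2) - 2*K) * (a*b - I) :=
      mul_nonneg (by linarith) (by linarith)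
    have iden : a ^ p + b ^ p - (a ^ (p-2) + b ^ (p-2)) * I - K * (a^2 + b^2 - 2*I)
        = ((a ^ (p-1) - b ^ (p-1)) * (a-b) - K * (a-b)^2)
          + (a ^ (p-2) + b ^ (p-2) - 2*K) * (a*b - I) := by
      linear_combination -e2a - e2b - b * e1a - a * e1b
    linarith
  · have hprod : 0 ≤ (2*K - (a ^ (p-2) + b ^ (p-2))) * (a*b + I) :=
      mul_nonneg (by linarith) (by linarith)
    have iden : a ^ p + b ^ p - (a ^ (p-2) + b ^ (p-2)) * I - K * (a^2 + b^2 - 2*I)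
        = ((a ^ (p-1) + b ^ (p-1)) * (a+b) - K * (a+b)^2)
          + (2*K - (a ^ (p-2) + b ^ (p-2))) * (a*b + I) := by
      linear_combination -e2a - e2b + b * e1a + a * e1b
    linarith

/-- Simon's inequality for `p ≥ 2`: for all `ξ, η ∈ ℝ^N`,
`5^((2−p)/2) |ξ − η|^p ≤ (|ξ|^{p−2} ξ − |η|^{p−2} η) ⬝ (ξ − η)`. -/
theorem simon_inequality_p_ge_two (N : ℕ) (p : ℝ) (hp : 2 ≤ p)
    (ξ η : EuclideanSpace ℝ (Fin N)) :
    (5 : ℝ) ^ ((2 - p) / 2) * ‖ξ - η‖ ^ p ≤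
      ⟪(‖ξ‖ ^ (p - 2)) • ξ - (‖η‖ ^ (p - 2)) • η, ξ - η⟫ := by
  have ha : (0:ℝ) ≤ ‖ξ‖ := norm_nonneg _
  have hb : (0:ℝ) ≤ ‖η‖ := norm_nonneg _
  have hd : (0:ℝ) ≤ ‖ξ - η‖ := norm_nonneg _
  have hq : (0:ℝ) ≤ (p-2)/2 := by linarith
  have hIab : |⟪ξ, η⟫| ≤ ‖ξ‖ * ‖η‖ := abs_real_inner_le_norm ξ η
  have e3a : ‖ξ‖ ^ (p-2) * ‖ξ‖ ^ 2 = ‖ξ‖ ^ p := by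
    have e1 : ‖ξ‖ ^ (p-2) * ‖ξ‖ = ‖ξ‖ ^ (p-1) :=
      aux_rpow1 ha (by ring) (by intro hcon; nlinarith [hcon])
    have e2 : ‖ξ‖ ^ (p-1) * ‖ξ‖ = ‖ξ‖ ^ p :=
      aux_rpow1 ha (by ring) (by intro hcon; nlinarith [hcon])
    calc ‖ξ‖ ^ (p-2) * ‖ξ‖ ^ 2 = ‖ξ‖ ^ (p-2) * ‖ξ‖ * ‖ξ‖ := by ring
      _ = ‖ξ‖ ^ (p-1) * ‖ξ‖ := by rw [e1]
      _ = ‖ξ‖ ^ p := e2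
  have e3b : ‖η‖ ^ (p-2) * ‖η‖ ^ 2 = ‖η‖ ^ p := by
    have e1 : ‖η‖ ^ (p-2) * ‖η‖ = ‖η‖ ^ (p-1) :=
      aux_rpow1 hb (by ring) (by intro hcon; nlinarith [hcon])
    have e2 : ‖η‖ ^ (p-1) * ‖η‖ = ‖η‖ ^ p :=
      aux_rpow1 hb (by ring) (by intro hcon; nlinarith [hcon])
    calc ‖η‖ ^ (p-2) * ‖η‖ ^ 2 = ‖η‖ ^ (p-2) * ‖η‖ * ‖η‖ := by ring
      _ = ‖η‖ ^ (p-1) * ‖η‖ := by rw [e1]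
      _ = ‖η‖ ^ p := e2
  have hexp : ⟪(‖ξ‖ ^ (p - 2)) • ξ - (‖η‖ ^ (p - 2)) • η, ξ - η⟫
      = ‖ξ‖ ^ p + ‖η‖ ^ p - (‖ξ‖ ^ (p-2) + ‖η‖ ^ (p-2)) * ⟪ξ, η⟫ := by
    simp only [inner_sub_left, inner_sub_right, real_inner_smul_left,
      real_inner_self_eq_norm_sq, real_inner_comm η ξ]
    linear_combination e3a + e3b
  have hDsq : ‖ξ - η‖ ^ 2 = ‖ξ‖ ^ 2 + ‖η‖ ^ 2 - 2 * ⟪ξ, η⟫ := by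
    have := norm_sub_sq_real ξ η
    linarith
  have step1 : (5:ℝ) ^ ((2-p)/2) * ‖ξ - η‖ ^ p
      ≤ ((‖ξ‖ + ‖η‖)^2/5) ^ ((p-2)/2) * ‖ξ - η‖ ^ 2 := by
    have hdb : ‖ξ - η‖ ≤ ‖ξ‖ + ‖η‖ := norm_sub_le ξ η
    have h1 : ‖ξ - η‖^2/5 ≤ (‖ξ‖ + ‖η‖)^2/5 := by nlinarith
    have h2 : (‖ξ - η‖^2/5) ^ ((p-2)/2) ≤ ((‖ξ‖ + ‖η‖)^2/5) ^ ((p-2)/2) :=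
      Real.rpow_le_rpow (by positivity) h1 hq
    have h3 : (5:ℝ) ^ ((2-p)/2) * ‖ξ - η‖ ^ p
        = (‖ξ - η‖^2/5) ^ ((p-2)/2) * ‖ξ - η‖ ^ 2 := by
      rw [Real.div_rpow (sq_nonneg _) (by norm_num), aux_sq_rpow hd,
        show 2*((p-2)/2) = p-2 by ring]
      have e5 : (5:ℝ) ^ ((2-p)/2) = ((5:ℝ) ^ ((p-2)/2))⁻¹ := by
        rw [← Real.rpow_neg (by norm_num)]
        congr 1
        ring
      have edp : ‖ξ - η‖ ^ (p-2) * ‖ξ - η‖ ^ 2 = ‖ξ - η‖ ^ p := by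
        have e1 : ‖ξ - η‖ ^ (p-2) * ‖ξ - η‖ = ‖ξ - η‖ ^ (p-1) :=
          aux_rpow1 hd (by ring) (by intro hcon; nlinarith [hcon])
        have e2 : ‖ξ - η‖ ^ (p-1) * ‖ξ - η‖ = ‖ξ - η‖ ^ p :=
          aux_rpow1 hd (by ring) (by intro hcon; nlinarith [hcon])
        calc ‖ξ - η‖ ^ (p-2) * ‖ξ - η‖ ^ 2 = ‖ξ - η‖ ^ (p-2) * ‖ξ - η‖ * ‖ξ - η‖ := by ring
          _ = ‖ξ - η‖ ^ (p-1) * ‖ξ - η‖ := by rw [e1]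
          _ = ‖ξ - η‖ ^ p := e2
      rw [e5, div_eq_mul_inv, ← edp]
      ring
    rw [h3]
    exact mul_le_mul_of_nonneg_right h2 (sq_nonneg _)
  have step2 : ((‖ξ‖ + ‖η‖)^2/5) ^ ((p-2)/2) * ‖ξ - η‖ ^ 2
      ≤ ‖ξ‖ ^ p + ‖η‖ ^ p - (‖ξ‖ ^ (p-2) + ‖η‖ ^ (p-2)) * ⟪ξ, η⟫ := by
    rw [hDsq]
    exact keyIneq hp ha hb hIab
  rw [hexp]
  exact step1.trans step2
end

section
/- Let 1 < p ≤ 2. Then for all vectors ξ, η ∈ ℝ^N, not both zero, one has (p−1)·2^{(p−1)(p−2)/p} |ξ − η|^2 ≤ [(|ξ|^{p−2}ξ − |η|^{p−2}η) · (ξ − η)] · (|ξ|^p + |η|^p)^{(2−p)/p}. -/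
/-!
Write `a = ‖ξ‖`, `b = ‖η‖`, `t = ⟪ξ, η⟫`. Both `‖ξ - η‖² = a² + b² - 2t` and the pairing
`⟪‖ξ‖^(p-2) ξ - ‖η‖^(p-2) η, ξ - η⟫ = a^p + b^p - (a^(p-2) + b^(p-2)) t` are affine in `t`, and
Cauchy–Schwarz gives `|t| ≤ a b`, so the inequality
`(p - 1) ‖ξ - η‖² (a + b)^(p-2) ≤ ⟪…⟫` only has to be checked at `t = ± a b`. There it reads
`(p - 1) (a ∓ b)² (a + b)^(p-2) ≤ (a^(p-1) ∓ b^(p-1)) (a ∓ b)`: for `t = a b` this is the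
tangent-line inequality of the concave map `x ↦ x^(p-1)` at `max a b`, for `t = -a b` its
subadditivity. Finally the power-mean inequality `(a + b)^p ≤ 2^(p-1) (a^p + b^p)`, raised to the
nonpositive exponent `(p - 2) / p`, trades `(a + b)^(p-2)` for
`2^((p-1)(p-2)/p) (a^p + b^p)^((p-2)/p)`.
-/

open scoped RealInnerProductSpace

namespace Real

lemma add_rpow_le_two_rpow_mul_add_rpow {a b p : ℝ} (ha : 0 ≤ a) (hb : 0 ≤ b) (hp : 1 ≤ p) :
    (a + b) ^ p ≤ 2 ^ (p - 1) * (a ^ p + b ^ p) := by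
  lift a to NNReal using ha
  lift b to NNReal using hb
  exact_mod_cast NNReal.rpow_add_le_mul_rpow_add_rpow a b hp

lemma mul_rpow_sub_one_mul_sub_le_rpow_sub_rpow {a b q : ℝ} (hb : 0 ≤ b) (hba : b ≤ a)
    (hq₀ : 0 ≤ q) (hq₁ : q ≤ 1) : q * a ^ (q - 1) * (a - b) ≤ a ^ q - b ^ q := by
  rcases (hb.trans hba).eq_or_lt with rfl | ha
  · obtain rfl : b = 0 := le_antisymm hba hb
    simp
  have hs : b ^ q = a ^ q * (1 + (b / a - 1)) ^ q := by
    rw [← mul_rpow ha.le (by linarith [div_nonneg hb ha.le])]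
    congr 1
    field_simp
    ring
  have bernoulli := mul_le_mul_of_nonneg_left (rpow_one_add_le_one_add_mul_self (s := b / a - 1)
    (by linarith [div_nonneg hb ha.le]) hq₀ hq₁) (rpow_nonneg ha.le q)
  calc q * a ^ (q - 1) * (a - b) = a ^ q * (q * (1 - b / a)) := by
        rw [rpow_sub_one ha.ne']; field_simp
    _ ≤ a ^ q - b ^ q := by rw [hs]; linarith

end Real

open Real

lemma sub_sq_mul_add_rpow_le {a b p : ℝ} (ha : 0 ≤ a) (hb : 0 ≤ b) (hp₁ : 1 < p) (hp₂ : p ≤ 2) :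
    (p - 1) * (a - b) ^ 2 * (a + b) ^ (p - 2) ≤ (a ^ (p - 1) - b ^ (p - 1)) * (a - b) := by
  wlog hba : b ≤ a generalizing a b
  · have := this hb ha (le_of_not_ge hba)
    rw [add_comm b a] at this
    linear_combination this
  rcases (hb.trans hba).eq_or_lt with rfl | ha'
  · obtain rfl : b = 0 := le_antisymm hba hb
    simp
  have tangent := mul_rpow_sub_one_mul_sub_le_rpow_sub_rpow hb hba (q := p - 1) (by linarith)
    (by linarith)
  have hpow : (a + b) ^ (p - 2) ≤ a ^ (p - 2) :=
    rpow_le_rpow_of_nonpos ha' (by linarith) (by linarith)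
  rw [show p - 1 - 1 = p - 2 by ring] at tangent
  have hab : 0 ≤ a - b := sub_nonneg.mpr hba
  calc (p - 1) * (a - b) ^ 2 * (a + b) ^ (p - 2)
      ≤ (p - 1) * (a - b) ^ 2 * a ^ (p - 2) := by gcongr
    _ = (p - 1) * a ^ (p - 2) * (a - b) * (a - b) := by ring
    _ ≤ (a ^ (p - 1) - b ^ (p - 1)) * (a - b) := by gcongr

lemma add_sq_mul_add_rpow_le {a b p : ℝ} (ha : 0 ≤ a) (hb : 0 ≤ b) (hp₁ : 1 < p) (hp₂ : p ≤ 2) :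
    (p - 1) * (a + b) ^ 2 * (a + b) ^ (p - 2) ≤ (a ^ (p - 1) + b ^ (p - 1)) * (a + b) := by
  have hab : 0 ≤ a + b := add_nonneg ha hb
  have hstep : (a + b) ^ (p - 1) = (a + b) ^ (p - 2) * (a + b) := by
    rw [← rpow_add_one' hab (by linarith)]; ring_nf
  have subadd := rpow_add_le_add_rpow ha hb (p := p - 1) (by linarith) (by linarith)
  have hnn : 0 ≤ (a + b) ^ (p - 1) := rpow_nonneg hab _
  calc (p - 1) * (a + b) ^ 2 * (a + b) ^ (p - 2) = (p - 1) * (a + b) ^ (p - 1) * (a + b) := by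
        rw [hstep]; ring
    _ ≤ (a + b) ^ (p - 1) * (a + b) := by gcongr; exact mul_le_of_le_one_left hnn (by linarith)
    _ ≤ (a ^ (p - 1) + b ^ (p - 1)) * (a + b) := by gcongr

lemma mul_le_of_abs_le_of_abs_mul_le {u v t c : ℝ} (ht : |t| ≤ c) (h : |u * c| ≤ v) : u * t ≤ v :=
  calc u * t ≤ |u| * |t| := (le_abs_self _).trans_eq (abs_mul _ _)
    _ ≤ |u| * c := by gcongr
    _ = |u * c| := by rw [abs_mul, abs_of_nonneg ((abs_nonneg t).trans ht)]
    _ ≤ v := h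

lemma simon_inequality_scalar {a b t p : ℝ} (ha : 0 ≤ a) (hb : 0 ≤ b) (ht : |t| ≤ a * b)
    (hp₁ : 1 < p) (hp₂ : p ≤ 2) :
    (p - 1) * (a ^ 2 + b ^ 2 - 2 * t) * (a + b) ^ (p - 2) ≤
      a ^ p + b ^ p - (a ^ (p - 2) + b ^ (p - 2)) * t := by
  have step : ∀ x : ℝ, 0 ≤ x → x ^ (p - 1) = x ^ (p - 2) * x ∧ x ^ p = x ^ (p - 2) * x ^ 2 :=
    fun x hx => ⟨by rw [← rpow_add_one' hx (by linarith)]; ring_nf,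
      by rw [← rpow_two, ← rpow_add' hx (by linarith)]; ring_nf⟩
  obtain ⟨ha₁, ha₂⟩ := step a ha
  obtain ⟨hb₁, hb₂⟩ := step b hb
  have diag := sub_sq_mul_add_rpow_le ha hb hp₁ hp₂
  have antidiag := add_sq_mul_add_rpow_le ha hb hp₁ hp₂
  rw [ha₁, hb₁] at diag antidiag
  rw [ha₂, hb₂]
  have key := mul_le_of_abs_le_of_abs_mul_le ht
    (u := a ^ (p - 2) + b ^ (p - 2) - 2 * (p - 1) * (a + b) ^ (p - 2))
    (v := a ^ (p - 2) * a ^ 2 + b ^ (p - 2) * b ^ 2 - (p - 1) * (a ^ 2 + b ^ 2) * (a + b) ^ (p - 2))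
    (abs_le.mpr ⟨by linear_combination antidiag, by linear_combination diag⟩)
  linear_combination key

lemma two_rpow_le_add_rpow_mul_add_rpow_rpow {a b p : ℝ} (ha : 0 ≤ a) (hb : 0 ≤ b)
    (hab : 0 < a + b) (hp₁ : 1 ≤ p) (hp₂ : p ≤ 2) :
    (2 : ℝ) ^ ((p - 1) * (p - 2) / p) ≤ (a + b) ^ (p - 2) * (a ^ p + b ^ p) ^ ((2 - p) / p) := by
  have hp : 0 < p := by linarith
  have mean := add_rpow_le_two_rpow_mul_add_rpow ha hb hp₁
  have hS : 0 < a ^ p + b ^ p :=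
    pos_of_mul_pos_right ((rpow_pos_of_pos hab p).trans_le mean) (by positivity)
  have hexp : (p - 2) / p ≤ 0 := div_nonpos_of_nonpos_of_nonneg (by linarith) hp.le
  have := rpow_le_rpow_of_nonpos (rpow_pos_of_pos hab p) mean hexp
  rw [← rpow_mul hab.le, mul_div_cancel₀ _ hp.ne', mul_rpow (by positivity) hS.le,
    ← rpow_mul zero_le_two] at this
  rw [mul_div_assoc]
  calc (2 : ℝ) ^ ((p - 1) * ((p - 2) / p))
      = 2 ^ ((p - 1) * ((p - 2) / p)) * (a ^ p + b ^ p) ^ ((p - 2) / p) *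
          (a ^ p + b ^ p) ^ ((2 - p) / p) := by
        rw [mul_assoc, ← rpow_add hS, ← add_div, sub_add_sub_cancel', sub_self, zero_div,
          rpow_zero, mul_one]
    _ ≤ (a + b) ^ (p - 2) * (a ^ p + b ^ p) ^ ((2 - p) / p) := by gcongr

lemma inner_norm_rpow_smul_sub_norm_rpow_smul {F : Type*} [NormedAddCommGroup F]
    [InnerProductSpace ℝ F] {p : ℝ} (hp : p ≠ 0) (x y : F) :
    ⟪‖x‖ ^ (p - 2) • x - ‖y‖ ^ (p - 2) • y, x - y⟫ =
      ‖x‖ ^ p + ‖y‖ ^ p - (‖x‖ ^ (p - 2) + ‖y‖ ^ (p - 2)) * ⟪x, y⟫ := by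
  have step : ∀ z : F, ‖z‖ ^ p = ‖z‖ ^ (p - 2) * ‖z‖ ^ 2 := fun z => by
    rw [← rpow_two, ← rpow_add' (norm_nonneg z) (by simpa)]; ring_nf
  rw [step x, step y]
  simp only [inner_sub_left, inner_sub_right, real_inner_smul_left, real_inner_self_eq_norm_sq,
    real_inner_comm x y]
  ring

/-- Simon's inequality for `1 < p ≤ 2`: for all `ξ, η ∈ ℝ^N`, not both zero,
`(p−1) 2^{(p−1)(p−2)/p} |ξ−η|^2 ≤ [(|ξ|^{p−2}ξ − |η|^{p−2}η) ⬝ (ξ−η)] (|ξ|^p + |η|^p)^{(2−p)/p}`. -/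
theorem simon_inequality_p_le_two (N : ℕ) (p : ℝ) (hp1 : 1 < p) (hp2 : p ≤ 2)
    (ξ η : EuclideanSpace ℝ (Fin N)) (hne : ξ ≠ 0 ∨ η ≠ 0) :
    (p - 1) * (2 : ℝ) ^ ((p - 1) * (p - 2) / p) * ‖ξ - η‖ ^ (2 : ℝ) ≤
      ⟪(‖ξ‖ ^ (p - 2)) • ξ - (‖η‖ ^ (p - 2)) • η, ξ - η⟫ *
        (‖ξ‖ ^ p + ‖η‖ ^ p) ^ ((2 - p) / p) := by
  have hpos : 0 < ‖ξ‖ + ‖η‖ := by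
    rcases hne with h | h
    · exact add_pos_of_pos_of_nonneg (norm_pos_iff.mpr h) (norm_nonneg η)
    · exact add_pos_of_nonneg_of_pos (norm_nonneg ξ) (norm_pos_iff.mpr h)
  have mean := two_rpow_le_add_rpow_mul_add_rpow_rpow (norm_nonneg ξ) (norm_nonneg η) hpos
    hp1.le hp2
  have scalar := simon_inequality_scalar (norm_nonneg ξ) (norm_nonneg η)
    (abs_real_inner_le_norm ξ η) hp1 hp2
  rw [inner_norm_rpow_smul_sub_norm_rpow_smul (by positivity), rpow_two]
  have hD : ‖ξ - η‖ ^ 2 = ‖ξ‖ ^ 2 + ‖η‖ ^ 2 - 2 * ⟪ξ, η⟫ := by rw [norm_sub_sq_real]; ring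
  rw [← hD] at scalar
  calc (p - 1) * (2 : ℝ) ^ ((p - 1) * (p - 2) / p) * ‖ξ - η‖ ^ 2
      ≤ (p - 1) * ((‖ξ‖ + ‖η‖) ^ (p - 2) * (‖ξ‖ ^ p + ‖η‖ ^ p) ^ ((2 - p) / p)) *
          ‖ξ - η‖ ^ 2 := by gcongr
    _ = (p - 1) * ‖ξ - η‖ ^ 2 * (‖ξ‖ + ‖η‖) ^ (p - 2) * (‖ξ‖ ^ p + ‖η‖ ^ p) ^ ((2 - p) / p) := by
        ring
    _ ≤ _ := by gcongr
end

section
/- Let ε > 0 and p_- > 1. Then there exists δ > 0, depending only on ε and p_-, such that for all s, t ≥ 0 with |t − s| > ε·max{t, s} and all real exponents p ≥ p_-, one has ((t+s)/2)^p ≤ (1 − δ)·(t^p + s^p)/2. -/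
/-! For a single exponent `p₋ > 1`, strict convexity of `t ↦ t ^ p₋` and compactness of
`{u : 0 ≤ u ≤ 1 - ε}` give `((1 + u) / 2) ^ p₋ ≤ c * (1 + u ^ p₋) / 2` with some `c < 1`, and
homogeneity extends this to all pairs `s, t` with `|t - s| > ε max t s`. For `p ≥ p₋`, raising
this inequality to the power `q = p / p₋ ≥ 1` keeps the factor `c ^ q ≤ c`, and Jensen's
inequality for the convex function `x ↦ x ^ q` bounds `((t ^ p₋ + s ^ p₋) / 2) ^ q` by
`(t ^ p + s ^ p) / 2`. -/

open Set Real

lemma rpow_one_add_div_two_lt {p u : ℝ} (hp : 1 < p) (hu : 0 ≤ u) (hu1 : u ≠ 1) :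
    ((1 + u) / 2) ^ p < (1 + u ^ p) / 2 := by
  have h := (strictConvexOn_rpow hp).2 (mem_Ici.2 zero_le_one) (mem_Ici.2 hu) hu1.symm
    (by norm_num : (0 : ℝ) < 1 / 2) (by norm_num : (0 : ℝ) < 1 / 2) (by norm_num)
  simp only [smul_eq_mul, one_rpow] at h
  rw [show (1 + u) / 2 = 1 / 2 * 1 + 1 / 2 * u by ring]
  linarith

lemma exists_rpow_one_add_div_two_le_mul {p a : ℝ} (hp : 1 < p) (ha0 : 0 ≤ a) (ha1 : a < 1) :
    ∃ c, 0 ≤ c ∧ c < 1 ∧ ∀ u ∈ Icc 0 a, ((1 + u) / 2) ^ p ≤ c * ((1 + u ^ p) / 2) := by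
  have hden : ∀ u ∈ Icc 0 a, 0 < (1 + u ^ p) / 2 := fun u hu => by
    have := rpow_nonneg hu.1 p; positivity
  set ratio : ℝ → ℝ := fun u => ((1 + u) / 2) ^ p / ((1 + u ^ p) / 2)
  have hcont : ContinuousOn ratio (Icc 0 a) := by
    refine ContinuousOn.div ?_ ?_ fun u hu => (hden u hu).ne'
    · exact ((continuousOn_const.add continuousOn_id).div_const 2).rpow_const
        fun _ _ => Or.inr (by linarith)
    · exact (continuousOn_const.add (continuousOn_id.rpow_const
        fun _ _ => Or.inr (by linarith))).div_const 2
  obtain ⟨x, hx, hmax⟩ := isCompact_Icc.exists_isMaxOn ⟨0, le_rfl, ha0⟩ hcont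
  refine ⟨ratio x, div_nonneg (rpow_nonneg (by linarith [hx.1]) p) (hden x hx).le, ?_, ?_⟩
  · exact (div_lt_one (hden x hx)).2
      (rpow_one_add_div_two_lt hp hx.1 (by linarith [hx.2]))
  · intro u hu
    exact (div_le_iff₀ (hden u hu)).1 (hmax hu)

lemma exists_rpow_midpoint_le_mul {p ε : ℝ} (hp : 1 < p) (hε : 0 < ε) :
    ∃ c, 0 ≤ c ∧ c < 1 ∧ ∀ s t : ℝ, 0 ≤ s → 0 ≤ t → ε * max t s < |t - s| →
      ((t + s) / 2) ^ p ≤ c * ((t ^ p + s ^ p) / 2) := by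
  obtain ⟨c, hc0, hc1, hc⟩ :=
    exists_rpow_one_add_div_two_le_mul hp (le_max_left 0 (1 - ε)) (max_lt one_pos (by linarith))
  refine ⟨c, hc0, hc1, fun s t hs ht hgap => ?_⟩
  wlog hst : s ≤ t generalizing s t
  · rw [max_comm, abs_sub_comm] at hgap
    rw [add_comm t, add_comm (t ^ p)]
    exact this t s ht hs hgap (le_of_not_ge hst)
  rw [max_eq_left hst, abs_of_nonneg (sub_nonneg.2 hst)] at hgap
  have htpos : 0 < t := by nlinarith
  set u := s / t
  have hu : u ∈ Icc 0 (max 0 (1 - ε)) :=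
    ⟨div_nonneg hs ht, le_max_of_le_right <| (div_le_iff₀ htpos).2 (by linarith)⟩
  have hsu : s = t * u := (mul_div_cancel₀ s htpos.ne').symm
  have hu0 : 0 ≤ u := hu.1
  calc ((t + s) / 2) ^ p = t ^ p * ((1 + u) / 2) ^ p := by
        rw [← mul_rpow ht (by positivity), hsu]; ring_nf
    _ ≤ t ^ p * (c * ((1 + u ^ p) / 2)) := by gcongr; exact hc u hu
    _ = c * ((t ^ p + s ^ p) / 2) := by rw [hsu, mul_rpow ht hu0]; ring

lemma rpow_midpoint_le_mul_of_exponent_le {pm p c s t : ℝ} (hpm : 0 < pm) (hp : pm ≤ p)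
    (hc0 : 0 ≤ c) (hc1 : c ≤ 1) (hs : 0 ≤ s) (ht : 0 ≤ t)
    (h : ((t + s) / 2) ^ pm ≤ c * ((t ^ pm + s ^ pm) / 2)) :
    ((t + s) / 2) ^ p ≤ c * ((t ^ p + s ^ p) / 2) := by
  set q := p / pm
  have hq : 1 ≤ q := (one_le_div hpm).2 hp
  have hpq : p = pm * q := (mul_div_cancel₀ p hpm.ne').symm
  have hjensen : ((t ^ pm + s ^ pm) / 2) ^ q ≤ (t ^ p + s ^ p) / 2 := by
    have h := (convexOn_rpow hq).2 (mem_Ici.2 (rpow_nonneg ht pm))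
      (mem_Ici.2 (rpow_nonneg hs pm)) (by norm_num : (0 : ℝ) ≤ 1 / 2)
      (by norm_num : (0 : ℝ) ≤ 1 / 2) (by norm_num)
    simp only [smul_eq_mul, ← rpow_mul ht, ← rpow_mul hs, ← hpq] at h
    rw [show (t ^ pm + s ^ pm) / 2 = 1 / 2 * t ^ pm + 1 / 2 * s ^ pm by ring]
    linarith
  have hcq : c ^ q ≤ c := by
    simpa using rpow_le_rpow_of_exponent_ge' hc0 hc1 zero_le_one hq
  calc ((t + s) / 2) ^ p = (((t + s) / 2) ^ pm) ^ q := by rw [hpq, rpow_mul (by positivity)]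
    _ ≤ (c * ((t ^ pm + s ^ pm) / 2)) ^ q := by gcongr
    _ = c ^ q * ((t ^ pm + s ^ pm) / 2) ^ q := mul_rpow hc0 (by positivity)
    _ ≤ c * ((t ^ p + s ^ p) / 2) := by gcongr

/-- Uniform convexity of the power functions `t ↦ t^p`, with a modulus uniform over
all exponents `p ≥ p₋ > 1`. -/
theorem uniform_convexity_powers (ε pm : ℝ) (hε : 0 < ε) (hpm : 1 < pm) :
    ∃ δ : ℝ, 0 < δ ∧ ∀ s t : ℝ, 0 ≤ s → 0 ≤ t → ε * max t s < |t - s| →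
      ∀ p : ℝ, pm ≤ p →
        ((t + s) / 2) ^ p ≤ (1 - δ) * ((t ^ p + s ^ p) / 2) := by
  obtain ⟨c, hc0, hc1, hc⟩ := exists_rpow_midpoint_le_mul hpm hε
  refine ⟨1 - c, by linarith, fun s t hs ht hgap p hp => ?_⟩
  rw [sub_sub_cancel]
  exact rpow_midpoint_le_mul_of_exponent_le (by linarith) hp hc0 hc1.le hs ht (hc s t hs ht hgap)
end

section
/- Let Ω ⊆ ℝ^N, let p, q : Ω → (1,∞) be measurable with p(x) < q(x), and let μ : Ω → [0,∞) be measurable. Let ε > 0. Then there exists δ > 0 such that for all s, t ≥ 0 with |t − s| > ε·max{t,s} and almost all x ∈ Ω: ((t+s)/2)^{p(x)} + μ(x)·((t+s)/2)^{q(x)} ≤ (1 − δ)·[ (t^{p(x)} + μ(x)t^{q(x)} + s^{p(x)} + μ(x)s^{q(x)}) / 2 ], provided 1 < p_- := inf p and 1 < q_- := inf q. -/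
/-!
On the normalised ratios `u = s / t ∈ [0, 1 - ε]` the strict convexity gap of `u ↦ u ^ r` is bounded
below by compactness, and homogeneity carries this back to all `s, t`. Uniformity in the exponent
comes from Jensen's inequality for the convex map `y ↦ y ^ (r / r₀)`: a gap `δ` at exponent `r₀`
persists, with the same `δ`, at every exponent `r ≥ r₀`. Adding the inequalities for `p x` and
`w x` times the one for `q x` gives the theorem.
-/

open MeasureTheory Set

lemma exists_rpow_half_one_add_le {r c : ℝ} (hr : 1 < r) (hc0 : 0 ≤ c) (hc1 : c < 1) :
    ∃ δ, 0 < δ ∧ δ ≤ 1 ∧ ∀ u ∈ Icc 0 c, ((1 + u) / 2) ^ r ≤ (1 - δ) * ((1 + u ^ r) / 2) := by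
  set f : ℝ → ℝ := fun u => ((1 + u) / 2) ^ r / ((1 + u ^ r) / 2)
  have hden : ∀ u : ℝ, 0 ≤ u → 0 < (1 + u ^ r) / 2 := fun u hu => by positivity
  have hf : ContinuousOn f (Icc 0 c) := by
    refine ContinuousOn.div ?_ ?_ fun u hu => (hden u hu.1).ne'
    · exact (((continuous_const.add continuous_id).div_const 2).rpow_const
        fun _ => Or.inr (by linarith)).continuousOn
    · exact ((continuous_const.add (continuous_id.rpow_const
        fun _ => Or.inr (by linarith))).div_const 2).continuousOn
  obtain ⟨u₀, hu₀, hmax⟩ := isCompact_Icc.exists_isMaxOn ⟨0, le_rfl, hc0⟩ hf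
  have hgap : f u₀ < 1 := by
    have hne : (1 : ℝ) ≠ u₀ := by linarith [hu₀.2]
    have h := (strictConvexOn_rpow hr).2 (mem_Ici.2 zero_le_one) (mem_Ici.2 hu₀.1) hne
      (by norm_num : (0 : ℝ) < 1 / 2) (by norm_num : (0 : ℝ) < 1 / 2) (by norm_num)
    simp only [smul_eq_mul, Real.one_rpow] at h
    rw [div_lt_one (hden u₀ hu₀.1)]
    convert h using 1 <;> ring_nf
  have hf0 : 0 ≤ f u₀ := div_nonneg (by have := hu₀.1; positivity) (hden u₀ hu₀.1).le
  refine ⟨1 - f u₀, by linarith, by linarith, fun u hu => ?_⟩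
  rw [sub_sub_cancel, ← div_le_iff₀ (hden u hu.1)]
  exact hmax hu

lemma rpow_half_add_le_of_div {r δ s t : ℝ} (hs : 0 ≤ s) (ht : 0 < t)
    (h : ((1 + s / t) / 2) ^ r ≤ (1 - δ) * ((1 + (s / t) ^ r) / 2)) :
    ((t + s) / 2) ^ r ≤ (1 - δ) * ((t ^ r + s ^ r) / 2) := by
  have hu : 0 ≤ s / t := div_nonneg hs ht.le
  have hmid : (t + s) / 2 = t * ((1 + s / t) / 2) := by field_simp
  calc ((t + s) / 2) ^ r = t ^ r * ((1 + s / t) / 2) ^ r := by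
        rw [hmid, Real.mul_rpow ht.le (by positivity)]
    _ ≤ t ^ r * ((1 - δ) * ((1 + (s / t) ^ r) / 2)) := by gcongr
    _ = (1 - δ) * ((t ^ r + (t * (s / t)) ^ r) / 2) := by rw [Real.mul_rpow ht.le hu]; ring
    _ = (1 - δ) * ((t ^ r + s ^ r) / 2) := by rw [mul_div_cancel₀ s ht.ne']

lemma exists_rpow_half_add_le {r ε : ℝ} (hr : 1 < r) (hε : 0 < ε) :
    ∃ δ, 0 < δ ∧ δ ≤ 1 ∧ ∀ s t : ℝ, 0 ≤ s → 0 ≤ t → ε * max t s < |t - s| →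
      ((t + s) / 2) ^ r ≤ (1 - δ) * ((t ^ r + s ^ r) / 2) := by
  have hε1 : min ε 1 ≤ 1 := min_le_right ε 1
  obtain ⟨δ, hδ0, hδ1, hδ⟩ :=
    exists_rpow_half_one_add_le hr (c := 1 - min ε 1) (by linarith) (by linarith [lt_min hε one_pos])
  refine ⟨δ, hδ0, hδ1, fun s t hs ht hst => ?_⟩
  wlog hts : s ≤ t generalizing s t
  · rw [add_comm t, add_comm (t ^ r)]
    exact this t s ht hs (by rwa [max_comm, abs_sub_comm]) (le_of_not_ge hts)
  rw [max_eq_left hts, abs_of_nonneg (sub_nonneg.2 hts)] at hst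
  have ht0 : 0 < t := by nlinarith
  refine rpow_half_add_le_of_div hs ht0 (hδ _ ⟨div_nonneg hs ht, ?_⟩)
  rw [div_le_iff₀ ht0]
  nlinarith [mul_le_mul_of_nonneg_right (min_le_left ε 1) ht]

lemma rpow_half_add_le_of_le {r₀ r δ s t : ℝ} (hr₀ : 0 < r₀) (hr : r₀ ≤ r) (hδ0 : 0 ≤ δ)
    (hδ1 : δ ≤ 1) (hs : 0 ≤ s) (ht : 0 ≤ t)
    (h : ((t + s) / 2) ^ r₀ ≤ (1 - δ) * ((t ^ r₀ + s ^ r₀) / 2)) :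
    ((t + s) / 2) ^ r ≤ (1 - δ) * ((t ^ r + s ^ r) / 2) := by
  set k := r / r₀
  have hk : 1 ≤ k := (one_le_div hr₀).2 hr
  have hpow : ∀ x : ℝ, 0 ≤ x → x ^ r = (x ^ r₀) ^ k := fun x hx => by
    rw [← Real.rpow_mul hx, mul_div_cancel₀ _ hr₀.ne']
  have hjensen : ((t ^ r₀ + s ^ r₀) / 2) ^ k ≤ (t ^ r + s ^ r) / 2 := by
    have h := (convexOn_rpow hk).2 (mem_Ici.2 (Real.rpow_nonneg ht r₀))
      (mem_Ici.2 (Real.rpow_nonneg hs r₀)) (by norm_num : (0 : ℝ) ≤ 1 / 2)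
      (by norm_num : (0 : ℝ) ≤ 1 / 2) (by norm_num)
    rw [hpow t ht, hpow s hs]
    simpa only [smul_eq_mul, one_div_mul_eq_div, add_div] using h
  calc ((t + s) / 2) ^ r = (((t + s) / 2) ^ r₀) ^ k := hpow _ (by positivity)
    _ ≤ ((1 - δ) * ((t ^ r₀ + s ^ r₀) / 2)) ^ k := by gcongr
    _ = (1 - δ) ^ k * ((t ^ r₀ + s ^ r₀) / 2) ^ k := Real.mul_rpow (by linarith) (by positivity)
    _ ≤ (1 - δ) * ((t ^ r + s ^ r) / 2) := by
      gcongr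
      exact Real.rpow_le_self_of_le_one (by linarith) (by linarith) hk

lemma exists_forall_le_rpow_half_add_le {r₀ ε : ℝ} (hr₀ : 1 < r₀) (hε : 0 < ε) :
    ∃ δ, 0 < δ ∧ ∀ r, r₀ ≤ r → ∀ s t : ℝ, 0 ≤ s → 0 ≤ t → ε * max t s < |t - s| →
      ((t + s) / 2) ^ r ≤ (1 - δ) * ((t ^ r + s ^ r) / 2) := by
  obtain ⟨δ, hδ0, hδ1, hδ⟩ := exists_rpow_half_add_le hr₀ hε
  exact ⟨δ, hδ0, fun r hr s t hs ht hst =>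
    rpow_half_add_le_of_le (by linarith) hr hδ0.le hδ1 hs ht (hδ s t hs ht hst)⟩

theorem double_phase_uniformly_convex_general (N : ℕ)
    (Ω : Set (EuclideanSpace ℝ (Fin N)))
    (p q w : EuclideanSpace ℝ (Fin N) → ℝ)
    (hpmeas : Measurable p) (hqmeas : Measurable q) (hwmeas : Measurable w)
    (hw : ∀ x ∈ Ω, 0 ≤ w x)
    (pm qm : ℝ) (hpm : 1 < pm) (hqm : 1 < qm)
    (hp : ∀ x ∈ Ω, pm ≤ p x) (hq : ∀ x ∈ Ω, qm ≤ q x)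
    (ε : ℝ) (hε : 0 < ε) :
    ∃ δ : ℝ, 0 < δ ∧ ∀ s t : ℝ, 0 ≤ s → 0 ≤ t → ε * max t s < |t - s| →
      ∀ᵐ x ∂(volume.restrict Ω),
        ((t + s) / 2) ^ p x + w x * ((t + s) / 2) ^ q x ≤
          (1 - δ) * ((t ^ p x + w x * t ^ q x + s ^ p x + w x * s ^ q x) / 2) := by
  obtain ⟨δ, hδ0, hδ⟩ := exists_forall_le_rpow_half_add_le (lt_min hpm hqm) hε
  refine ⟨δ, hδ0, fun s t hs ht hst => ?_⟩
  -- `Ω` need not be measurable, so the pointwise hypotheses are passed through a measurable set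
  have hgood : MeasurableSet {x | pm ≤ p x ∧ qm ≤ q x ∧ 0 ≤ w x} :=
    (measurableSet_le measurable_const hpmeas).inter
      ((measurableSet_le measurable_const hqmeas).inter (measurableSet_le measurable_const hwmeas))
  filter_upwards [(ae_restrict_iff hgood).2 (ae_of_all _ fun x hx => ⟨hp x hx, hq x hx, hw x hx⟩)]
    with x ⟨hpx, hqx, hwx⟩
  have hP := hδ (p x) ((min_le_left _ _).trans hpx) s t hs ht hst
  have hQ := hδ (q x) ((min_le_right _ _).trans hqx) s t hs ht hst
  nlinarith [mul_le_mul_of_nonneg_left hQ hwx]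

/-- Uniform convexity of the double phase integrand
`H(x,t) = t^{p(x)} + μ(x) t^{q(x)}` with variable exponents. -/
theorem double_phase_uniformly_convex (N : ℕ)
    (Ω : Set (EuclideanSpace ℝ (Fin N)))
    (p q w : EuclideanSpace ℝ (Fin N) → ℝ)
    (hpmeas : Measurable p) (hqmeas : Measurable q) (hwmeas : Measurable w)
    (hw : ∀ x ∈ Ω, 0 ≤ w x)
    (pm qm : ℝ) (hpm : 1 < pm) (hqm : 1 < qm)
    (hp : ∀ x ∈ Ω, pm ≤ p x) (hq : ∀ x ∈ Ω, qm ≤ q x)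
    (hpq : ∀ x ∈ Ω, p x < q x)
    (ε : ℝ) (hε : 0 < ε) :
    ∃ δ : ℝ, 0 < δ ∧ ∀ s t : ℝ, 0 ≤ s → 0 ≤ t → ε * max t s < |t - s| →
      ∀ᵐ x ∂(volume.restrict Ω),
        ((t + s) / 2) ^ p x + w x * ((t + s) / 2) ^ q x ≤
          (1 - δ) * ((t ^ p x + w x * t ^ q x + s ^ p x + w x * s ^ q x) / 2) :=
  double_phase_uniformly_convex_general N Ω p q w hpmeas hqmeas hwmeas hw pm qm hpm hqm hp hq ε hε
end

section
/- Let (S, Σ, λ) be a measure space with λ(S) > 0 and let r : S → [1,∞) be measurable with 1 < r_- := ess inf r ≤ r_+ := ess sup r < ∞. Then for all measurable f, g : S → ℝ with g(s) ≠ 0 a.e., max{ ‖fg‖₁^{1/r_-}, ‖fg‖₁^{1/r_+} } ≥ [1/r_- + 1/r'_-]^{-1} · ‖ |f|^{1/r(·)} ‖₁ · min{ ‖ |g|^{−1/(r(·)−1)} ‖₁^{(1−r_+)/r_-}, ‖ |g|^{−1/(r(·)−1)} ‖₁^{(1−r_-)/r_+} }, where r'_- is defined by 1/r_- + 1/r'_-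 = 1 and ‖·‖₁ denotes the L¹-norm. -/
/-!
Young's inequality with a free parameter `t > 0` gives, pointwise,
`|f| ^ (1/r) ≤ (t / r_-) |f g| + (1 - 1/r_+) T |g| ^ (-1/(r-1))` whenever `T` bounds
`t ^ (-1/(ρ-1))` for all `ρ ∈ [r_-, r_+]`; note `1 - 1/r_+ = 1/r'_-`. Integrating,
`‖|f|^{1/r}‖₁ ≤ (1/r_- + 1/r'_-) max (t I, T J)` with `I = ‖f g‖₁`, `J = ‖|g|^{-1/(r-1)}‖₁`.
With `q = r_+` if `I ≤ J` and `q = r_-` otherwise, `t = (J / I) ^ (1 - 1/q)` makes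
`ρ ↦ t ^ (-1/(ρ-1))` largest at `ρ = q`, so `T = t ^ (-1/(q-1))` is admissible and
`t I = T J = J ^ (1 - 1/q) I ^ (1/q)`. The factor
`min (J ^ ((1 - r_+)/r_-), J ^ ((1 - r_-)/r_+))` absorbs `J ^ (1 - 1/q)`, leaving
`I ^ (1/q) ≤ max (I ^ (1/r_-), I ^ (1/r_+))`.
-/

open MeasureTheory ENNReal

lemma one_sub_one_div_nonneg {q : ℝ} (hq : 1 ≤ q) : 0 ≤ 1 - 1 / q :=
  sub_nonneg.2 ((div_le_one (by linarith)).2 hq)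

/-- Weighted AM-GM for `u = t x y` and `v = (t y) ^ (-1/(p-1))`, for which
`u ^ (1/p) v ^ (1 - 1/p) = x ^ (1/p)`. -/
lemma rpow_one_div_le_young {p x y t : ℝ} (hp : 1 < p) (hx : 0 ≤ x) (hy : 0 < y) (ht : 0 < t) :
    x ^ (1 / p) ≤ 1 / p * (t * (x * y)) + (1 - 1 / p) * (t * y) ^ (-1 / (p - 1)) := by
  have hty : 0 < t * y := by positivity
  have hsplit :
      (t * (x * y)) ^ (1 / p) * ((t * y) ^ (-1 / (p - 1))) ^ (1 - 1 / p) = x ^ (1 / p) := by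
    have hexp : -1 / (p - 1) * (1 - 1 / p) = -(1 / p) := by
      field_simp [(by linarith : p - 1 ≠ 0)]
    rw [← Real.rpow_mul hty.le, hexp, Real.rpow_neg hty.le, ← div_eq_mul_inv,
      ← Real.div_rpow (by positivity) hty.le, mul_left_comm, mul_div_cancel_right₀ _ hty.ne']
  rw [← hsplit]
  exact Real.geom_mean_le_arith_mean2_weighted (by positivity) (one_sub_one_div_nonneg hp.le)
    (by positivity) (by positivity) (by ring)

lemma abs_rpow_le_young_of_mem_Icc {rm rp ρ t T a b : ℝ} (hrm : 1 < rm) (hρ : ρ ∈ Set.Icc rm rp)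
    (ht : 0 < t) (htT : t ^ (-1 / (ρ - 1)) ≤ T) (hb : b ≠ 0) :
    |a| ^ (1 / ρ) ≤ t / rm * |a * b| + (1 - 1 / rp) * T * |b| ^ (-1 / (ρ - 1)) := by
  have hρ1 : 1 < ρ := hrm.trans_le hρ.1
  calc |a| ^ (1 / ρ)
      ≤ 1 / ρ * (t * (|a| * |b|)) + (1 - 1 / ρ) * (t * |b|) ^ (-1 / (ρ - 1)) :=
        rpow_one_div_le_young hρ1 (abs_nonneg a) (abs_pos.2 hb) ht
    _ = t / ρ * |a * b| + (1 - 1 / ρ) * t ^ (-1 / (ρ - 1)) * |b| ^ (-1 / (ρ - 1)) := by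
        rw [Real.mul_rpow ht.le (abs_nonneg b), abs_mul]
        ring
    _ ≤ t / rm * |a * b| + (1 - 1 / rp) * T * |b| ^ (-1 / (ρ - 1)) := by
        gcongr
        exacts [hρ.1, one_sub_one_div_nonneg (hρ1.le.trans hρ.2), hρ.2]

lemma rpow_le_max_of_mem_Icc {x a b e : ℝ} (hx : 0 < x) (he : e ∈ Set.Icc a b) :
    x ^ e ≤ max (x ^ a) (x ^ b) := by
  rcases le_total 1 x with h1 | h1
  · exact (Real.rpow_le_rpow_of_exponent_le h1 he.2).trans (le_max_right _ _)
  · exact (Real.rpow_le_rpow_of_exponent_ge hx h1 he.1).trans (le_max_left _ _)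

lemma min_rpow_le_one {x u v : ℝ} (hx : 0 < x) (hu : u ≤ 0) (hv : 0 ≤ v) :
    min (x ^ u) (x ^ v) ≤ 1 := by
  rcases le_total 1 x with h1 | h1
  · exact (min_le_left _ _).trans (Real.rpow_le_one_of_one_le_of_nonpos h1 hu)
  · exact (min_le_right _ _).trans (Real.rpow_le_one hx.le h1 hv)

lemma div_rpow_mul_self {x y : ℝ} (b : ℝ) (hx : 0 < x) (hy : 0 < y) :
    (y / x) ^ b * x = y ^ b * x ^ (1 - b) := by
  rw [Real.div_rpow hy.le hx.le, Real.rpow_sub hx, Real.rpow_one]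
  field_simp

lemma balanced_young_bound {rm rp q I J : ℝ} (hrm : 1 < rm) (hq : q ∈ Set.Icc rm rp)
    (hI : 0 < I) (hJ : 0 < J) :
    max ((J / I) ^ (1 - 1 / q) * I) (((J / I) ^ (1 - 1 / q)) ^ (-1 / (q - 1)) * J) *
        min (J ^ ((1 - rp) / rm)) (J ^ ((1 - rm) / rp)) ≤
      max (I ^ (1 / rm)) (I ^ (1 / rp)) := by
  obtain ⟨hq1, hq2⟩ := hq
  have hrm0 : 0 < rm := by linarith
  have hq0 : 0 < q := by linarith
  have hrp0 : 0 < rp := by linarith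
  have hdual : ((J / I) ^ (1 - 1 / q)) ^ (-1 / (q - 1)) = (I / J) ^ (1 / q) := by
    rw [← Real.rpow_mul (by positivity), ← inv_div, Real.inv_rpow (by positivity),
      ← Real.rpow_neg (by positivity)]
    congr 1
    field_simp [(by linarith : q - 1 ≠ 0)]
  have hleft : (J / I) ^ (1 - 1 / q) * I = J ^ (1 - 1 / q) * I ^ (1 / q) := by
    rw [div_rpow_mul_self _ hI hJ, _root_.sub_sub_cancel]
  have hright : (I / J) ^ (1 / q) * J = J ^ (1 - 1 / q) * I ^ (1 / q) := by
    rw [div_rpow_mul_self _ hJ hI, mul_comm]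
  have hup : 1 - 1 / q + (1 - rp) / rm ≤ 0 := by
    have h1 : 1 / rp ≤ 1 / q := one_div_le_one_div_of_le hq0 hq2
    have h2 : (rp - 1) / rp ≤ (rp - 1) / rm :=
      div_le_div_of_nonneg_left (by linarith) hrm0 (hq1.trans hq2)
    have h3 : (rp - 1) / rp = 1 - 1 / rp := by field_simp
    have h4 : (1 - rp) / rm = -((rp - 1) / rm) := by ring
    linarith
  have hlow : 0 ≤ 1 - 1 / q + (1 - rm) / rp := by
    have h1 : 1 / q ≤ 1 / rm := one_div_le_one_div_of_le hrm0 hq1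
    have h2 : (rm - 1) / rp ≤ (rm - 1) / rm :=
      div_le_div_of_nonneg_left (by linarith) hrm0 (hq1.trans hq2)
    have h3 : (rm - 1) / rm = 1 - 1 / rm := by field_simp
    have h4 : (1 - rm) / rp = -((rm - 1) / rp) := by ring
    linarith
  rw [hdual, hleft, hright, max_self]
  calc J ^ (1 - 1 / q) * I ^ (1 / q) * min (J ^ ((1 - rp) / rm)) (J ^ ((1 - rm) / rp))
      = min (J ^ (1 - 1 / q + (1 - rp) / rm)) (J ^ (1 - 1 / q + (1 - rm) / rp)) *
          I ^ (1 / q) := by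
        rw [Real.rpow_add hJ, Real.rpow_add hJ, ← mul_min_of_nonneg _ _ (by positivity)]
        ring
    _ ≤ 1 * max (I ^ (1 / rm)) (I ^ (1 / rp)) := by
        gcongr
        · exact min_rpow_le_one hJ hup hlow
        · exact (rpow_le_max_of_mem_Icc hI ⟨one_div_le_one_div_of_le hq0 hq2,
            one_div_le_one_div_of_le hrm0 hq1⟩).trans_eq (max_comm _ _)
    _ = max (I ^ (1 / rm)) (I ^ (1 / rp)) := one_mul _

lemma exists_young_parameter {rm rp I J : ℝ} (hrm : 1 < rm) (hle : rm ≤ rp) (hI : 0 < I)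
    (hJ : 0 < J) :
    ∃ t T : ℝ, 0 < t ∧ (∀ ρ ∈ Set.Icc rm rp, t ^ (-1 / (ρ - 1)) ≤ T) ∧
      max (t * I) (T * J) * min (J ^ ((1 - rp) / rm)) (J ^ ((1 - rm) / rp)) ≤
        max (I ^ (1 / rm)) (I ^ (1 / rp)) := by
  suffices ∃ q ∈ Set.Icc rm rp, ∀ ρ ∈ Set.Icc rm rp,
      ((J / I) ^ (1 - 1 / q)) ^ (-1 / (ρ - 1)) ≤ ((J / I) ^ (1 - 1 / q)) ^ (-1 / (q - 1)) by
    obtain ⟨q, hq, hmax⟩ := this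
    exact ⟨_, _, by positivity, hmax, balanced_young_bound hrm hq hI hJ⟩
  have hexp {a b : ℝ} (ha : 1 < a) (hab : a ≤ b) : -1 / (a - 1) ≤ -1 / (b - 1) := by
    rw [neg_div, neg_div, neg_le_neg_iff]
    exact one_div_le_one_div_of_le (by linarith) (by linarith)
  rcases le_total I J with hIJ | hJI
  · refine ⟨rp, ⟨hle, le_rfl⟩, fun ρ hρ =>
      Real.rpow_le_rpow_of_exponent_le ?_ (hexp (hrm.trans_le hρ.1) hρ.2)⟩
    exact Real.one_le_rpow ((one_le_div hI).2 hIJ)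
      (one_sub_one_div_nonneg (hrm.trans_le hle).le)
  · refine ⟨rm, ⟨le_rfl, hle⟩, fun ρ hρ =>
      Real.rpow_le_rpow_of_exponent_ge (by positivity) ?_ (hexp hrm hρ.1)⟩
    exact Real.rpow_le_one (by positivity) ((div_le_one hI).2 hJI) (one_sub_one_div_nonneg hrm.le)

section Integrals

variable {S : Type*} [MeasurableSpace S] {ν : Measure S} {r f g : S → ℝ}

lemma lintegral_abs_rpow_ne_zero {e : S → ℝ} (hν : ν ≠ 0) (hg : Measurable g)
    (he : Measurable e) (hg0 : ∀ᵐ s ∂ν, g s ≠ 0) :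
    ∫⁻ s, ENNReal.ofReal (|g s| ^ e s) ∂ν ≠ 0 := by
  rw [Ne, lintegral_eq_zero_iff (by fun_prop)]
  intro hzero
  have : ∀ᵐ s ∂ν, False := by
    filter_upwards [hzero, hg0] with s hs hgs
    simp only [Pi.zero_apply, ENNReal.ofReal_eq_zero] at hs
    exact (Real.rpow_pos_of_pos (abs_pos.2 hgs) _).not_ge hs
  exact hν (ae_eq_bot.1 (Filter.eventually_false_iff_eq_bot.1 this))

lemma lintegral_abs_rpow_eq_zero (hf : Measurable f) (hg : Measurable g)
    (hg0 : ∀ᵐ s ∂ν, g s ≠ 0) (hr0 : ∀ᵐ s ∂ν, r s ≠ 0)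
    (hfg : ∫⁻ s, ENNReal.ofReal |f s * g s| ∂ν = 0) :
    ∫⁻ s, ENNReal.ofReal (|f s| ^ (1 / r s)) ∂ν = 0 := by
  rw [lintegral_eq_zero_iff (by fun_prop)] at hfg
  refine (lintegral_congr_ae ?_).trans lintegral_zero
  filter_upwards [hfg, hg0, hr0] with s hs hgs hrs
  simp only [Pi.zero_apply, ENNReal.ofReal_eq_zero, abs_nonpos_iff, mul_eq_zero, hgs,
    or_false] at hs
  rw [hs, abs_zero, Real.zero_rpow (one_div_ne_zero hrs), ofReal_zero]

lemma lintegral_abs_rpow_le_young {rm rp t T : ℝ} (hf : Measurable f) (hg : Measurable g)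
    (hrm : 1 < rm) (hbounds : ∀ᵐ s ∂ν, r s ∈ Set.Icc rm rp) (hg0 : ∀ᵐ s ∂ν, g s ≠ 0)
    (ht : 0 < t) (htT : ∀ ρ ∈ Set.Icc rm rp, t ^ (-1 / (ρ - 1)) ≤ T) :
    ∫⁻ s, ENNReal.ofReal (|f s| ^ (1 / r s)) ∂ν ≤
      ENNReal.ofReal (t / rm) * ∫⁻ s, ENNReal.ofReal |f s * g s| ∂ν +
        ENNReal.ofReal ((1 - 1 / rp) * T) * ∫⁻ s, ENNReal.ofReal (|g s| ^ (-1 / (r s - 1))) ∂ν := by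
  rw [← lintegral_const_mul' _ _ ofReal_ne_top, ← lintegral_const_mul' _ _ ofReal_ne_top,
    ← lintegral_add_left (by fun_prop)]
  refine lintegral_mono_ae ?_
  filter_upwards [hbounds, hg0] with s hs hgs
  have hT : 0 ≤ T := (Real.rpow_pos_of_pos ht _).le.trans (htT _ hs)
  have hrp : 0 ≤ 1 - 1 / rp := one_sub_one_div_nonneg (hrm.le.trans (hs.1.trans hs.2))
  rw [← ofReal_mul (by positivity), ← ofReal_mul (by positivity), ← ofReal_add (by positivity)
    (by positivity)]
  exact ofReal_le_ofReal (abs_rpow_le_young_of_mem_Icc hrm hs ht (htT _ hs) hgs)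

end Integrals

lemma inv_add_mul_add_le_max {a b x y : ℝ} (ha : 0 < a) (hb : 0 < b) :
    (a + b)⁻¹ * (a * x + b * y) ≤ max x y := by
  rw [inv_mul_le_iff₀ (by positivity)]
  nlinarith [le_max_left x y, le_max_right x y]

lemma reverse_hoelder_of_young {rm rp r'm : ℝ} {F I J : ℝ≥0∞} (hrm : 1 < rm) (hle : rm ≤ rp)
    (hr'm : r'm = rp / (rp - 1)) (hJ0 : J ≠ 0) (hF0 : I = 0 → F = 0)
    (hF : ∀ t T : ℝ, 0 < t → (∀ ρ ∈ Set.Icc rm rp, t ^ (-1 / (ρ - 1)) ≤ T) →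
      F ≤ ENNReal.ofReal (t / rm) * I + ENNReal.ofReal ((1 - 1 / rp) * T) * J) :
    ENNReal.ofReal ((1 / rm + 1 / r'm)⁻¹) * F * min (J ^ ((1 - rp) / rm)) (J ^ ((1 - rm) / rp)) ≤
      max (I ^ (1 / rm)) (I ^ (1 / rp)) := by
  have hrm0 : 0 < rm := by linarith
  have hrp1 : 1 < rp := hrm.trans_le hle
  rcases eq_or_ne I ⊤ with rfl | hI
  · rw [top_rpow_of_pos (one_div_pos.2 hrm0)]
    exact le_top.trans (le_max_left _ _)
  rcases eq_or_ne I 0 with hI0 | hI0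
  · simp [hF0 hI0]
  rcases eq_or_ne J ⊤ with rfl | hJ
  · simp [top_rpow_of_neg (div_neg_of_neg_of_pos (by linarith : 1 - rp < 0) hrm0)]
  obtain ⟨i, hi, rfl⟩ : ∃ i, 0 < i ∧ ENNReal.ofReal i = I :=
    ⟨I.toReal, toReal_pos hI0 hI, ofReal_toReal hI⟩
  obtain ⟨j, hj, rfl⟩ : ∃ j, 0 < j ∧ ENNReal.ofReal j = J :=
    ⟨J.toReal, toReal_pos hJ0 hJ, ofReal_toReal hJ⟩
  obtain ⟨t, T, ht, htT, hbound⟩ := exists_young_parameter hrm hle hi hj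
  have hT : 0 ≤ T := (Real.rpow_pos_of_pos ht _).le.trans (htT rm ⟨le_rfl, hle⟩)
  have hr'm0 : 0 < r'm := by rw [hr'm]; exact div_pos (by linarith) (by linarith)
  have hconj : 1 - 1 / rp = 1 / r'm := by
    rw [hr'm, one_div_div]
    field_simp
  calc ENNReal.ofReal ((1 / rm + 1 / r'm)⁻¹) * F *
        min (ENNReal.ofReal j ^ ((1 - rp) / rm)) (ENNReal.ofReal j ^ ((1 - rm) / rp))
      ≤ ENNReal.ofReal ((1 / rm + 1 / r'm)⁻¹) *
          (ENNReal.ofReal (t / rm) * ENNReal.ofReal i +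
            ENNReal.ofReal (1 / r'm * T) * ENNReal.ofReal j) *
          ENNReal.ofReal (min (j ^ ((1 - rp) / rm)) (j ^ ((1 - rm) / rp))) := by
        rw [ofReal_min, ← ofReal_rpow_of_pos hj, ← ofReal_rpow_of_pos hj, ← hconj]
        gcongr
        exact hF t T ht htT
    _ = ENNReal.ofReal ((1 / rm + 1 / r'm)⁻¹ * (1 / rm * (t * i) + 1 / r'm * (T * j)) *
          min (j ^ ((1 - rp) / rm)) (j ^ ((1 - rm) / rp))) := by
        rw [← ofReal_mul (by positivity), ← ofReal_mul (by positivity),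
          ← ofReal_add (by positivity) (by positivity), ← ofReal_mul (by positivity),
          ← ofReal_mul (by positivity)]
        congr 1
        ring
    _ ≤ ENNReal.ofReal (max (t * i) (T * j) * min (j ^ ((1 - rp) / rm)) (j ^ ((1 - rm) / rp))) := by
        gcongr
        exact inv_add_mul_add_le_max (by positivity) (by positivity)
    _ ≤ ENNReal.ofReal (max (i ^ (1 / rm)) (i ^ (1 / rp))) := ofReal_le_ofReal hbound
    _ = max (ENNReal.ofReal i ^ (1 / rm)) (ENNReal.ofReal i ^ (1 / rp)) := by
        rw [ofReal_max, ofReal_rpow_of_pos hi, ofReal_rpow_of_pos hi]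

theorem reverse_hoelder_variable_exponent_general {S : Type*} [MeasurableSpace S]
    (ν : Measure S)
    (r : S → ℝ) (hr : Measurable r)
    (rm rp r'm : ℝ) (hrm : 1 < rm)
    (hbounds : ∀ᵐ s ∂ν, rm ≤ r s ∧ r s ≤ rp)
    (hr'm : r'm = rp / (rp - 1))
    (f g : S → ℝ) (hf : Measurable f) (hg : Measurable g)
    (hg0 : ∀ᵐ s ∂ν, g s ≠ 0) :
    ENNReal.ofReal ((1 / rm + 1 / r'm)⁻¹) *
        (∫⁻ s, ENNReal.ofReal (|f s| ^ (1 / r s)) ∂ν) *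
        min ((∫⁻ s, ENNReal.ofReal (|g s| ^ (-(1 : ℝ) / (r s - 1))) ∂ν) ^ ((1 - rp) / rm))
            ((∫⁻ s, ENNReal.ofReal (|g s| ^ (-(1 : ℝ) / (r s - 1))) ∂ν) ^ ((1 - rm) / rp)) ≤
      max ((∫⁻ s, ENNReal.ofReal |f s * g s| ∂ν) ^ (1 / rm))
          ((∫⁻ s, ENNReal.ofReal |f s * g s| ∂ν) ^ (1 / rp)) := by
  rcases eq_or_ne ν 0 with rfl | hν
  · simp
  have : (ae ν).NeBot := ae_neBot.2 hν
  obtain ⟨s₀, hs₀⟩ := hbounds.exists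
  have hr0 : ∀ᵐ s ∂ν, r s ≠ 0 := hbounds.mono fun s hs => by linarith [hs.1]
  exact reverse_hoelder_of_young hrm (hs₀.1.trans hs₀.2) hr'm
    (lintegral_abs_rpow_ne_zero hν hg (by fun_prop) hg0)
    (lintegral_abs_rpow_eq_zero hf hg hg0 hr0)
    (fun t T ht htT => lintegral_abs_rpow_le_young hf hg hrm hbounds hg0 ht htT)

/-- Reverse Hölder inequality with variable exponent. -/
theorem reverse_hoelder_variable_exponent {S : Type*} [MeasurableSpace S]
    (ν : Measure S) (hν : 0 < ν Set.univ)
    (r : S → ℝ) (hr : Measurable r)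
    (rm rp r'm : ℝ) (hrm : 1 < rm)
    (hbounds : ∀ᵐ s ∂ν, rm ≤ r s ∧ r s ≤ rp)
    (hr'm : r'm = rp / (rp - 1))
    (f g : S → ℝ) (hf : Measurable f) (hg : Measurable g)
    (hg0 : ∀ᵐ s ∂ν, g s ≠ 0) :
    ENNReal.ofReal ((1 / rm + 1 / r'm)⁻¹) *
        (∫⁻ s, ENNReal.ofReal (|f s| ^ (1 / r s)) ∂ν) *
        min ((∫⁻ s, ENNReal.ofReal (|g s| ^ (-(1 : ℝ) / (r s - 1))) ∂ν) ^ ((1 - rp) / rm))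
            ((∫⁻ s, ENNReal.ofReal (|g s| ^ (-(1 : ℝ) / (r s - 1))) ∂ν) ^ ((1 - rm) / rp)) ≤
      max ((∫⁻ s, ENNReal.ofReal |f s * g s| ∂ν) ^ (1 / rm))
          ((∫⁻ s, ENNReal.ofReal |f s * g s| ∂ν) ^ (1 / rp)) :=
  reverse_hoelder_variable_exponent_general ν r hr rm rp r'm hrm hbounds hr'm f g hf hg hg0
end
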